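/- arXiv:1308.6643 — 4 statements merged into one kernel-verified Lean document; each statement's English description precedes it below -/
import Mathlib

section
/- Suppose a block 2×2 matrix M = [[A₂₂, Û₂ Ã₂₃ V̂₃*],[Û₃ Ã₃₂ V̂₂*, A₃₃]] where A₂₂ (n₂×n₂) and A₃₃ (n₃×n₃) are invertible, Û₂, V̂₂ are n₂×k₂, Û₃, V̂₃ are n₃×k₃, and Ã₂₃, Ã₃₂* are k₂×k₃. Define S₂ = V̂₂* A₂₂^{-1} Û₂ and S₃ = V̂₃* A₃₃^{-1} Û₃, and assume the block matrix Z = [[I, S₂ Ã₂₃],[S₃ Ã₃₂, I]] is invertible and M is invertible. Then [[V̂₂*,0],[0,V̂₃*]] M^{-1} [[Û₂,0],[0,Û₃]] = Z^{-1} [[S₂,0],[0,S₃]]. -/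
open Matrix

/-- Equation (4.9): the key identity underlying the merge of two scattering matrices. -/
theorem scattering_merge_identity {n₂ n₃ k₂ k₃ : ℕ}
    (A₂₂ : Matrix (Fin n₂) (Fin n₂) ℂ) (A₃₃ : Matrix (Fin n₃) (Fin n₃) ℂ)
    (U₂ : Matrix (Fin n₂) (Fin k₂) ℂ) (V₂ : Matrix (Fin n₂) (Fin k₂) ℂ)
    (U₃ : Matrix (Fin n₃) (Fin k₃) ℂ) (V₃ : Matrix (Fin n₃) (Fin k₃) ℂ)
    (At₂₃ : Matrix (Fin k₂) (Fin k₃) ℂ) (At₃₂ : Matrix (Fin k₃) (Fin k₂) ℂ)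
    (hA₂₂ : IsUnit A₂₂) (hA₃₃ : IsUnit A₃₃)
    (M : Matrix (Fin n₂ ⊕ Fin n₃) (Fin n₂ ⊕ Fin n₃) ℂ)
    (hM : M = fromBlocks A₂₂ (U₂ * At₂₃ * V₃ᴴ) (U₃ * At₃₂ * V₂ᴴ) A₃₃)
    (hMinv : IsUnit M)
    (S₂ : Matrix (Fin k₂) (Fin k₂) ℂ) (hS₂ : S₂ = V₂ᴴ * A₂₂⁻¹ * U₂)
    (S₃ : Matrix (Fin k₃) (Fin k₃) ℂ) (hS₃ : S₃ = V₃ᴴ * A₃₃⁻¹ * U₃)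
    (Z : Matrix (Fin k₂ ⊕ Fin k₃) (Fin k₂ ⊕ Fin k₃) ℂ)
    (hZ : Z = fromBlocks 1 (S₂ * At₂₃) (S₃ * At₃₂) 1)
    (hZinv : IsUnit Z) :
    fromBlocks V₂ᴴ 0 0 V₃ᴴ * M⁻¹ * fromBlocks U₂ 0 0 U₃ =
      Z⁻¹ * fromBlocks S₂ 0 0 S₃ := by
  set D : Matrix (Fin n₂ ⊕ Fin n₃) (Fin n₂ ⊕ Fin n₃) ℂ := fromBlocks A₂₂ 0 0 A₃₃ with hD
  set Uu : Matrix (Fin n₂ ⊕ Fin n₃) (Fin k₂ ⊕ Fin k₃) ℂ := fromBlocks U₂ 0 0 U₃ with hUu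
  set Vt : Matrix (Fin k₂ ⊕ Fin k₃) (Fin n₂ ⊕ Fin n₃) ℂ := fromBlocks V₂ᴴ 0 0 V₃ᴴ with hVt
  set C : Matrix (Fin k₂ ⊕ Fin k₃) (Fin k₂ ⊕ Fin k₃) ℂ := fromBlocks 0 At₂₃ At₃₂ 0 with hC
  set S : Matrix (Fin k₂ ⊕ Fin k₃) (Fin k₂ ⊕ Fin k₃) ℂ := fromBlocks S₂ 0 0 S₃ with hS
  have hDunit : IsUnit D := by
    rw [hD]
    exact isUnit_fromBlocks_zero₂₁.mpr ⟨hA₂₂, hA₃₃⟩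
  have hDinv : D⁻¹ = fromBlocks A₂₂⁻¹ 0 0 A₃₃⁻¹ := by
    rw [hD, inv_fromBlocks_zero₂₁_of_isUnit_iff _ _ _ (iff_of_true hA₂₂ hA₃₃)]
    simp
  have hMdecomp : M = D + Uu * C * Vt := by
    rw [hM, hD, hUu, hC, hVt, fromBlocks_multiply, fromBlocks_multiply, fromBlocks_add]
    simp [Matrix.mul_assoc]
  have hSeq : S = Vt * D⁻¹ * Uu := by
    rw [hS, hVt, hDinv, hUu, fromBlocks_multiply, fromBlocks_multiply, hS₂, hS₃]
    simp
  have hZeq : Z = 1 + S * C := by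
    rw [hZ, hS, hC, fromBlocks_multiply, ← fromBlocks_one, fromBlocks_add]
    simp
  -- M * M⁻¹ = 1
  have hMM : M * M⁻¹ = 1 := mul_nonsing_inv M ((isUnit_iff_isUnit_det M).mp hMinv)
  have hDD : D⁻¹ * D = 1 := nonsing_inv_mul D ((isUnit_iff_isUnit_det D).mp hDunit)
  have hMinvEq : M⁻¹ = D⁻¹ - D⁻¹ * (Uu * C * Vt) * M⁻¹ := by
    have h1 : D * M⁻¹ + Uu * C * Vt * M⁻¹ = 1 := by
      rw [← add_mul, ← hMdecomp, hMM]
    calc M⁻¹ = D⁻¹ * (D * M⁻¹) := by rw [← Matrix.mul_assoc, hDD, Matrix.one_mul]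
    _ = D⁻¹ * (1 - Uu * C * Vt * M⁻¹) := by rw [eq_sub_of_add_eq h1]
    _ = D⁻¹ - D⁻¹ * (Uu * C * Vt) * M⁻¹ := by
        simp only [Matrix.mul_sub, Matrix.mul_one, Matrix.mul_assoc]
  have hZX : Z * (Vt * M⁻¹ * Uu) = S := by
    rw [hZeq, add_mul, Matrix.one_mul]
    have : Vt * M⁻¹ * Uu = S - S * C * (Vt * M⁻¹ * Uu) := by
      calc Vt * M⁻¹ * Uu
          = Vt * (D⁻¹ - D⁻¹ * (Uu * C * Vt) * M⁻¹) * Uu := by rw [← hMinvEq]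
        _ = Vt * D⁻¹ * Uu - Vt * D⁻¹ * Uu * C * (Vt * M⁻¹ * Uu) := by
            simp only [Matrix.mul_sub, Matrix.sub_mul, Matrix.mul_assoc]
        _ = S - S * C * (Vt * M⁻¹ * Uu) := by rw [← hSeq]
    nth_rewrite 1 [this]
    abel
  calc Vt * M⁻¹ * Uu = Z⁻¹ * (Z * (Vt * M⁻¹ * Uu)) := by
        rw [← Matrix.mul_assoc, nonsing_inv_mul Z ((isUnit_iff_isUnit_det Z).mp hZinv),
          Matrix.one_mul]
    _ = Z⁻¹ * S := by rw [hZX]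
end

section
/- Let A be an invertible n×n matrix partitioned into blocks A_{αα}, A_{αβ}, A_{βα}, A_{ββ} with A_{αα} (n_α×n_α) and A_{ββ} (n_β×n_β) invertible. Suppose A_{αβ} = Û_α Ã_{αβ} V̂_β* and A_{βα} = Û_β Ã_{βα} V̂_α* for matrices Û_α, V̂_α of size n_α×k_α and Û_β, V̂_β of size n_β×k_β. Define S_α = V̂_α* A_{αα}^{-1} Û_α and S_β = V̂_β* A_{ββ}^{-1} Û_β, set Z = [[I, S_α Ã_{αβ}],[S_β Ã_{βα}, I]], and assume Z is invertible. Given small matrices U_τ, V_τ of size (k_α+k_β)×k_τ, define Û_τ = diag(Û_α, Û_β) U_τ and V̂_τ = diag(V̂_α, V̂_β) V_τ, and S_τ = V̂_τ* A^{-1} Û_τ. Then S_τ = V_τ* Z^{-1} diag(S_α, S_β) U_τ. -/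
open Matrix

/-- Lemma 5.1 (the merge lemma): the scattering matrix of a parent node is computed
from the scattering matrices and sibling interaction matrices of its children. -/
theorem merge_lemma {nα nβ kα kβ kτ : ℕ}
    (Aαα : Matrix (Fin nα) (Fin nα) ℂ) (Aββ : Matrix (Fin nβ) (Fin nβ) ℂ)
    (Aαβ : Matrix (Fin nα) (Fin nβ) ℂ) (Aβα : Matrix (Fin nβ) (Fin nα) ℂ)
    (Uα Vα : Matrix (Fin nα) (Fin kα) ℂ) (Uβ Vβ : Matrix (Fin nβ) (Fin kβ) ℂ)
    (Atαβ : Matrix (Fin kα) (Fin kβ) ℂ) (Atβα : Matrix (Fin kβ) (Fin kα) ℂ)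
    (hαβ : Aαβ = Uα * Atαβ * Vβᴴ) (hβα : Aβα = Uβ * Atβα * Vαᴴ)
    (hAαα : IsUnit Aαα) (hAββ : IsUnit Aββ)
    (A : Matrix (Fin nα ⊕ Fin nβ) (Fin nα ⊕ Fin nβ) ℂ)
    (hA : A = fromBlocks Aαα Aαβ Aβα Aββ) (hAinv : IsUnit A)
    (Sα : Matrix (Fin kα) (Fin kα) ℂ) (hSα : Sα = Vαᴴ * Aαα⁻¹ * Uα)
    (Sβ : Matrix (Fin kβ) (Fin kβ) ℂ) (hSβ : Sβ = Vβᴴ * Aββ⁻¹ * Uβ)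
    (Z : Matrix (Fin kα ⊕ Fin kβ) (Fin kα ⊕ Fin kβ) ℂ)
    (hZ : Z = fromBlocks 1 (Sα * Atαβ) (Sβ * Atβα) 1) (hZinv : IsUnit Z)
    (Uτ Vτ : Matrix (Fin kα ⊕ Fin kβ) (Fin kτ) ℂ)
    (Uhτ : Matrix (Fin nα ⊕ Fin nβ) (Fin kτ) ℂ)
    (hUhτ : Uhτ = fromBlocks Uα 0 0 Uβ * Uτ)
    (Vhτ : Matrix (Fin nα ⊕ Fin nβ) (Fin kτ) ℂ)
    (hVhτ : Vhτ = fromBlocks Vα 0 0 Vβ * Vτ)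
    (Sτ : Matrix (Fin kτ) (Fin kτ) ℂ) (hSτ : Sτ = Vhτᴴ * A⁻¹ * Uhτ) :
    Sτ = Vτᴴ * Z⁻¹ * fromBlocks Sα 0 0 Sβ * Uτ := by
  set Uh : Matrix (Fin nα ⊕ Fin nβ) (Fin kα ⊕ Fin kβ) ℂ := fromBlocks Uα 0 0 Uβ with hUh
  set Vh : Matrix (Fin nα ⊕ Fin nβ) (Fin kα ⊕ Fin kβ) ℂ := fromBlocks Vα 0 0 Vβ with hVh
  set Di : Matrix (Fin nα ⊕ Fin nβ) (Fin nα ⊕ Fin nβ) ℂ := fromBlocks Aαα⁻¹ 0 0 Aββ⁻¹ with hDi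
  set T : Matrix (Fin kα ⊕ Fin kβ) (Fin kα ⊕ Fin kβ) ℂ := fromBlocks 0 Atαβ Atβα 0 with hT
  set S : Matrix (Fin kα ⊕ Fin kβ) (Fin kα ⊕ Fin kβ) ℂ := fromBlocks Sα 0 0 Sβ with hS
  have hVhct : Vhᴴ = fromBlocks Vαᴴ 0 0 Vβᴴ := by
    simp [hVh, fromBlocks_conjTranspose]
  -- A = D + Uh * T * Vhᴴ  where D = fromBlocks Aαα 0 0 Aββ
  have hAdecomp : A = fromBlocks Aαα 0 0 Aββ + Uh * T * Vhᴴ := by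
    rw [hA, hUh, hT, hVhct, fromBlocks_multiply, fromBlocks_multiply, fromBlocks_add]
    simp [hαβ, hβα, Matrix.mul_assoc]
  -- Di * D = 1
  have hDiD : Di * fromBlocks Aαα 0 0 Aββ = 1 := by
    rw [hDi, fromBlocks_multiply]
    simp [Matrix.nonsing_inv_mul _ ((Matrix.isUnit_iff_isUnit_det _).mp hAαα),
      Matrix.nonsing_inv_mul _ ((Matrix.isUnit_iff_isUnit_det _).mp hAββ),
      fromBlocks_one]
  -- Vhᴴ * Di * Uh = S
  have hVDU : Vhᴴ * Di * Uh = S := by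
    rw [hVhct, hDi, hUh, hS, fromBlocks_multiply, fromBlocks_multiply, hSα, hSβ]
    simp
  -- Z = 1 + S * T
  have hZ' : Z = 1 + S * T := by
    rw [hZ, hS, hT, fromBlocks_multiply, ← fromBlocks_one, fromBlocks_add]
    simp
  have hAA : A * A⁻¹ = 1 :=
    Matrix.mul_nonsing_inv _ ((Matrix.isUnit_iff_isUnit_det _).mp hAinv)
  set X : Matrix (Fin kα ⊕ Fin kβ) (Fin kα ⊕ Fin kβ) ℂ := Vhᴴ * A⁻¹ * Uh with hX
  have key : Vhᴴ * Di * A = Vhᴴ + S * T * Vhᴴ := by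
    rw [hAdecomp, Matrix.mul_add]
    congr 1
    · rw [Matrix.mul_assoc Vhᴴ Di, hDiD, Matrix.mul_one]
    · simp only [← Matrix.mul_assoc, hVDU]
  have hZX : Z * X = S := by
    calc Z * X = (Vhᴴ + S * T * Vhᴴ) * (A⁻¹ * Uh) := by
          rw [hZ', hX]
          simp only [Matrix.add_mul, Matrix.one_mul, Matrix.mul_assoc]
      _ = Vhᴴ * Di * A * (A⁻¹ * Uh) := by rw [key]
      _ = Vhᴴ * Di * Uh := by
          rw [Matrix.mul_assoc (Vhᴴ * Di) A, ← Matrix.mul_assoc A, hAA, Matrix.one_mul]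
      _ = S := hVDU
  have hXeq : X = Z⁻¹ * S := by
    have := congrArg (fun M => Z⁻¹ * M) hZX
    simpa [← Matrix.mul_assoc,
      Matrix.nonsing_inv_mul _ ((Matrix.isUnit_iff_isUnit_det _).mp hZinv)] using this
  rw [hSτ, hUhτ, hVhτ, Matrix.conjTranspose_mul]
  calc Vτᴴ * Vhᴴ * A⁻¹ * (Uh * Uτ) = Vτᴴ * (Vhᴴ * A⁻¹ * Uh) * Uτ := by
        simp only [Matrix.mul_assoc]
      _ = Vτᴴ * Z⁻¹ * S * Uτ := by rw [← hX, hXeq]; simp only [Matrix.mul_assoc]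
end

section
/- Let A_{αα}, A_{ββ} be invertible, and define Z = [[I, S_α Ã_{αβ}],[S_β Ã_{βα}, I]] (assumed invertible) with S_α = V̂_α* A_{αα}^{-1} Û_α, S_β = V̂_β* A_{ββ}^{-1} Û_β. Then the inverse of the block matrix A(I_τ,I_τ) = [[A_{αα}, Û_α Ã_{αβ} V̂_β*],[Û_β Ã_{βα} V̂_α*, A_{ββ}]] equals diag(A_{αα}^{-1}, A_{ββ}^{-1}) · (I − [[0, Û_α Ã_{αβ}],[Û_β Ã_{βα}, 0]] · Z · [[V̂_α* A_{αα}^{-1}, 0],[0, V̂_β* A_{ββ}^{-1}]]). -/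
open Matrix

/-- Formula (5.12): the explicit Woodbury inverse of the two-level block system. -/
theorem woodbury_block_inverse {nα nβ kα kβ : ℕ}
    (Aαα : Matrix (Fin nα) (Fin nα) ℂ) (Aββ : Matrix (Fin nβ) (Fin nβ) ℂ)
    (Uα Vα : Matrix (Fin nα) (Fin kα) ℂ) (Uβ Vβ : Matrix (Fin nβ) (Fin kβ) ℂ)
    (Atαβ : Matrix (Fin kα) (Fin kβ) ℂ) (Atβα : Matrix (Fin kβ) (Fin kα) ℂ)
    (hAαα : IsUnit Aαα) (hAββ : IsUnit Aββ)
    (Sα : Matrix (Fin kα) (Fin kα) ℂ) (hSα : Sα = Vαᴴ * Aαα⁻¹ * Uα)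
    (Sβ : Matrix (Fin kβ) (Fin kβ) ℂ) (hSβ : Sβ = Vβᴴ * Aββ⁻¹ * Uβ)
    (Z : Matrix (Fin kα ⊕ Fin kβ) (Fin kα ⊕ Fin kβ) ℂ)
    (hZ : Z = fromBlocks 1 (Sα * Atαβ) (Sβ * Atβα) 1) (hZinv : IsUnit Z)
    (hAinv : IsUnit (fromBlocks Aαα (Uα * Atαβ * Vβᴴ) (Uβ * Atβα * Vαᴴ) Aββ)) :
    (fromBlocks Aαα (Uα * Atαβ * Vβᴴ) (Uβ * Atβα * Vαᴴ) Aββ)⁻¹ =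
      fromBlocks Aαα⁻¹ 0 0 Aββ⁻¹ *
        (1 - fromBlocks 0 (Uα * Atαβ) (Uβ * Atβα) 0 * Z⁻¹ *
              fromBlocks (Vαᴴ * Aαα⁻¹) 0 0 (Vβᴴ * Aββ⁻¹)) := by
  have hA1 : Aαα⁻¹ * Aαα = 1 :=
    Matrix.nonsing_inv_mul _ ((Matrix.isUnit_iff_isUnit_det _).mp hAαα)
  have hB1 : Aββ⁻¹ * Aββ = 1 :=
    Matrix.nonsing_inv_mul _ ((Matrix.isUnit_iff_isUnit_det _).mp hAββ)
  have hZZ : Z⁻¹ * Z = 1 :=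
    Matrix.nonsing_inv_mul _ ((Matrix.isUnit_iff_isUnit_det _).mp hZinv)
  apply Matrix.inv_eq_left_inv
  set M := fromBlocks Aαα (Uα * Atαβ * Vβᴴ) (Uβ * Atβα * Vαᴴ) Aββ with hM
  set B := fromBlocks (0 : Matrix (Fin nα) (Fin kα) ℂ) (Uα * Atαβ) (Uβ * Atβα) 0 with hBdef
  set W := fromBlocks (Vαᴴ * Aαα⁻¹) (0 : Matrix (Fin kα) (Fin nβ) ℂ) 0 (Vβᴴ * Aββ⁻¹) with hWdef
  have hV : W * M = Z * fromBlocks Vαᴴ 0 0 Vβᴴ := by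
    subst hZ hSα hSβ
    rw [hWdef, hM]
    simp only [Matrix.fromBlocks_multiply, Matrix.mul_zero, Matrix.zero_mul, add_zero,
      zero_add, Matrix.one_mul, Matrix.mul_one]
    refine Matrix.fromBlocks_inj.mpr ⟨?_, ?_, ?_, ?_⟩ <;>
      simp [Matrix.mul_assoc, hA1, hB1]
  have key : (1 - B * Z⁻¹ * W) * M = fromBlocks Aαα 0 0 Aββ := by
    rw [sub_mul, one_mul, Matrix.mul_assoc (B * Z⁻¹) W M, hV,
      Matrix.mul_assoc B Z⁻¹ (Z * fromBlocks Vαᴴ 0 0 Vβᴴ),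
      ← Matrix.mul_assoc Z⁻¹ Z (fromBlocks Vαᴴ 0 0 Vβᴴ), hZZ, Matrix.one_mul, hBdef, hM]
    rw [Matrix.fromBlocks_multiply, sub_eq_add_neg, Matrix.fromBlocks_neg,
      Matrix.fromBlocks_add]
    refine Matrix.fromBlocks_inj.mpr ⟨?_, ?_, ?_, ?_⟩ <;> simp
  rw [mul_assoc, key]
  simp [Matrix.fromBlocks_multiply, hA1, hB1, ← Matrix.fromBlocks_one]
end

section
/- Let A be an invertible N×N matrix, Û an N×k matrix, and V̂ an N×k matrix with V̂* V̂ = I (orthonormal columns). Let A_in, A_out be matrices with ‖A_in − Û Û† A_in‖ ≤ ε and ‖A_out − A_out V̂ V̂*‖ ≤ ε, where † denotes the Moore–Penrose pseudoinverse. Then ‖A_out A^{-1} A_in − (A_out V̂)(V̂* A^{-1} Û)(Û† A_in)‖ ≤ ε ‖A^{-1}‖ (‖A_in‖ + ‖A_out‖ ‖Û Û†‖). -/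
set_option maxHeartbeats 800000

open Matrix

attribute [local instance]
  Matrix.instL2OpNormedAddCommGroup Matrix.instL2OpNormedSpace

/-- The Moore–Penrose pseudoinverse of a matrix with full column rank. -/
noncomputable def pinvFullColRank {N k : ℕ} (U : Matrix (Fin N) (Fin k) ℂ) :
    Matrix (Fin k) (Fin N) ℂ :=
  (Uᴴ * U)⁻¹ * Uᴴ

/-- Accuracy of the compressed scattering matrix representation (Section 4.2). -/
theorem compressed_scattering_accuracy {N k Nin Nout : ℕ}
    (A : Matrix (Fin N) (Fin N) ℂ) (hA : IsUnit A)
    (U V : Matrix (Fin N) (Fin k) ℂ)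
    (hU : IsUnit (Uᴴ * U)) (hV : Vᴴ * V = 1)
    (Ain : Matrix (Fin N) (Fin Nin) ℂ) (Aout : Matrix (Fin Nout) (Fin N) ℂ)
    (ε : ℝ)
    (hin : ‖Ain - U * pinvFullColRank U * Ain‖ ≤ ε)
    (hout : ‖Aout - Aout * V * Vᴴ‖ ≤ ε) :
    ‖Aout * A⁻¹ * Ain -
        Aout * V * (Vᴴ * A⁻¹ * U) * (pinvFullColRank U * Ain)‖ ≤
      ε * ‖A⁻¹‖ * (‖Ain‖ + ‖Aout‖ * ‖U * pinvFullColRank U‖) := by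
  set p := pinvFullColRank U with hp
  set P := U * p with hP
  have hε : (0:ℝ) ≤ ε := le_trans (norm_nonneg _) hin
  have hpU : p * U = 1 := by
    rw [hp, pinvFullColRank, Matrix.mul_assoc,
      Matrix.nonsing_inv_mul _ ((Matrix.isUnit_iff_isUnit_det _).mp hU)]
  have hPherm : Pᴴ = P := by
    rw [hP, hp, pinvFullColRank]
    simp only [Matrix.conjTranspose_mul, Matrix.conjTranspose_nonsing_inv,
      Matrix.conjTranspose_conjTranspose, Matrix.mul_assoc]
  have hPP : P * P = P := by
    rw [hP, Matrix.mul_assoc, ← Matrix.mul_assoc p U p, hpU, Matrix.one_mul]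
  have hPnorm : ‖P‖ = 0 ∨ ‖P‖ = 1 := by
    have := Matrix.l2_opNorm_conjTranspose_mul_self P
    rw [hPherm, hPP] at this
    rcases eq_or_ne (‖P‖) 0 with h | h
    · exact Or.inl h
    · exact Or.inr (mul_left_cancel₀ h (by rw [mul_one]; exact this)).symm
  -- rewrite the compressed term
  have hterm : Aout * V * (Vᴴ * A⁻¹ * U) * (p * Ain)
      = Aout * V * Vᴴ * A⁻¹ * P * Ain := by
    rw [hP]; simp only [Matrix.mul_assoc]
  rcases hPnorm with h0 | h1
  · -- P = 0 case
    have hP0 : P = 0 := norm_eq_zero.mp h0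
    have hU0 : U = 0 := by
      have : P * U = U := by rw [hP, Matrix.mul_assoc, hpU, Matrix.mul_one]
      rw [hP0, Matrix.zero_mul] at this; exact this.symm
    have h10 : (1 : Matrix (Fin k) (Fin k) ℂ) = 0 := by
      rw [← hpU, hU0, Matrix.mul_zero]
    have hk : k = 0 := by
      by_contra hk
      have : (1 : Matrix (Fin k) (Fin k) ℂ) ⟨0, Nat.pos_of_ne_zero hk⟩
          ⟨0, Nat.pos_of_ne_zero hk⟩ = 0 := by rw [h10]; rfl
      simp at this
    have hVV : V * Vᴴ = 0 := by
      subst hk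
      ext i j
      simp [Matrix.mul_apply]
    have hAin : ‖Ain‖ ≤ ε := by
      rwa [hP0, Matrix.zero_mul, sub_zero] at hin
    have hAout : ‖Aout‖ ≤ ε := by
      rwa [Matrix.mul_assoc, hVV, Matrix.mul_zero, sub_zero] at hout
    rw [hterm, hP0, Matrix.mul_zero, Matrix.zero_mul, sub_zero, norm_zero,
      mul_zero, add_zero]
    calc ‖Aout * A⁻¹ * Ain‖ ≤ ‖Aout * A⁻¹‖ * ‖Ain‖ := Matrix.l2_opNorm_mul _ _
      _ ≤ ‖Aout‖ * ‖A⁻¹‖ * ‖Ain‖ := by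
          gcongr; exact Matrix.l2_opNorm_mul _ _
      _ ≤ ε * ‖A⁻¹‖ * ‖Ain‖ := by gcongr
  · -- ‖P‖ = 1 case
    have hsplit : Aout * A⁻¹ * Ain - Aout * V * Vᴴ * A⁻¹ * P * Ain
        = (Aout - Aout * V * Vᴴ) * (A⁻¹ * (P * Ain))
          + Aout * (A⁻¹ * (Ain - P * Ain)) := by
      simp only [Matrix.sub_mul, Matrix.mul_sub, Matrix.mul_assoc]
      abel
    rw [hterm, hsplit]
    have hPAin : ‖P * Ain‖ ≤ ‖Ain‖ := by
      calc ‖P * Ain‖ ≤ ‖P‖ * ‖Ain‖ := Matrix.l2_opNorm_mul _ _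
        _ = ‖Ain‖ := by rw [h1, one_mul]
    have hinP : ‖Ain - P * Ain‖ ≤ ε := hin
    have b1 : ‖(Aout - Aout * V * Vᴴ) * (A⁻¹ * (P * Ain))‖
        ≤ ε * (‖A⁻¹‖ * ‖Ain‖) := by
      calc ‖(Aout - Aout * V * Vᴴ) * (A⁻¹ * (P * Ain))‖
          ≤ ‖Aout - Aout * V * Vᴴ‖ * ‖A⁻¹ * (P * Ain)‖ :=
            Matrix.l2_opNorm_mul _ _
        _ ≤ ε * (‖A⁻¹‖ * ‖Ain‖) := by
            apply mul_le_mul hout _ (norm_nonneg _) hε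
            calc ‖A⁻¹ * (P * Ain)‖ ≤ ‖A⁻¹‖ * ‖P * Ain‖ := Matrix.l2_opNorm_mul _ _
              _ ≤ ‖A⁻¹‖ * ‖Ain‖ := by gcongr
    have b2 : ‖Aout * (A⁻¹ * (Ain - P * Ain))‖ ≤ ‖Aout‖ * (‖A⁻¹‖ * ε) := by
      calc ‖Aout * (A⁻¹ * (Ain - P * Ain))‖
          ≤ ‖Aout‖ * ‖A⁻¹ * (Ain - P * Ain)‖ := Matrix.l2_opNorm_mul _ _
        _ ≤ ‖Aout‖ * (‖A⁻¹‖ * ε) := by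
            gcongr
            calc ‖A⁻¹ * (Ain - P * Ain)‖ ≤ ‖A⁻¹‖ * ‖Ain - P * Ain‖ :=
                Matrix.l2_opNorm_mul _ _
              _ ≤ ‖A⁻¹‖ * ε := by gcongr
    calc ‖(Aout - Aout * V * Vᴴ) * (A⁻¹ * (P * Ain))
          + Aout * (A⁻¹ * (Ain - P * Ain))‖
        ≤ ε * (‖A⁻¹‖ * ‖Ain‖) + ‖Aout‖ * (‖A⁻¹‖ * ε) :=
          le_trans (norm_add_le _ _) (add_le_add b1 b2)
      _ = ε * ‖A⁻¹‖ * (‖Ain‖ + ‖Aout‖ * ‖P‖) := by rw [h1]; ring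
end
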